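/- arXiv:2403.11272 — 3 statements merged into one kernel-verified Lean document; each statement's English description precedes it below -/
import Mathlib

section
/- For fixed η > 0, the function p ↦ (√p·a/√η − 1)² + p·b/η on [0, P], where a > 0 and b ≥ 0, attains its minimum at p* = min(P, a²η/(a²+b)²). -/
/-!
Completing the square in `s = √p`, the objective equals
`(a² + b)/η · (s - a√η/(a² + b))² + b/(a² + b)`, so it is increasing in the distance from `√p`
to `a√η/(a² + b)`. Over `√p ∈ [0, √P]` that distance is minimised by the projection
`min (√P) (a√η/(a² + b)) = √(min P (a²η/(a² + b)²))`.
-/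

theorem abs_min_sub_le_abs_sub {α : Type*} [AddCommGroup α] [LinearOrder α] [IsOrderedAddMonoid α]
    {x u m : α} (hx : x ≤ u) : |min u m - m| ≤ |x - m| := by
  rcases le_total u m with hum | hmu
  · rw [min_eq_left hum, abs_of_nonpos (sub_nonpos.mpr hum),
      abs_of_nonpos (sub_nonpos.mpr (hx.trans hum))]
    exact neg_le_neg (sub_le_sub_right hx m)
  · simp [min_eq_right hmu]

theorem sq_mul_div_sub_one_add_eq (a b s e : ℝ) (hc : a ^ 2 + b ≠ 0) (he : e ≠ 0) :
    (s * a / e - 1) ^ 2 + s ^ 2 * b / e ^ 2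
      = (a ^ 2 + b) / e ^ 2 * (s - a * e / (a ^ 2 + b)) ^ 2 + b / (a ^ 2 + b) := by
  field_simp
  ring

theorem sq_sqrt_mul_div_sqrt_sub_one_add_eq (a b η p : ℝ) (hc : a ^ 2 + b ≠ 0) (hη : 0 < η)
    (hp : 0 ≤ p) :
    (Real.sqrt p * a / Real.sqrt η - 1) ^ 2 + p * b / η
      = (a ^ 2 + b) / η * (Real.sqrt p - a * Real.sqrt η / (a ^ 2 + b)) ^ 2
        + b / (a ^ 2 + b) := by
  have h := sq_mul_div_sub_one_add_eq a b (Real.sqrt p) (Real.sqrt η) hc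
    (Real.sqrt_pos.mpr hη).ne'
  rwa [Real.sq_sqrt hp, Real.sq_sqrt hη.le] at h

/-- For fixed `η > 0`, the function `p ↦ (√p·a/√η − 1)² + p·b/η` on `[0, P]`,
where `a > 0` and `b ≥ 0`, attains its minimum at `p* = min(P, a²η/(a²+b)²)`. -/
theorem stmt_0 (a b P η : ℝ) (ha : 0 < a) (hb : 0 ≤ b) (hP : 0 < P) (hη : 0 < η) :
    min P (a ^ 2 * η / (a ^ 2 + b) ^ 2) ∈ Set.Icc 0 P ∧
    ∀ p ∈ Set.Icc (0 : ℝ) P,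
      (Real.sqrt (min P (a ^ 2 * η / (a ^ 2 + b) ^ 2)) * a / Real.sqrt η - 1) ^ 2
        + min P (a ^ 2 * η / (a ^ 2 + b) ^ 2) * b / η
      ≤ (Real.sqrt p * a / Real.sqrt η - 1) ^ 2 + p * b / η := by
  have hc : 0 < a ^ 2 + b := by positivity
  have hq : 0 ≤ min P (a ^ 2 * η / (a ^ 2 + b) ^ 2) := le_min hP.le (by positivity)
  refine ⟨⟨hq, min_le_left _ _⟩, fun p ⟨hp, hpP⟩ => ?_⟩
  have hsqrt : Real.sqrt (min P (a ^ 2 * η / (a ^ 2 + b) ^ 2))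
      = min (Real.sqrt P) (a * Real.sqrt η / (a ^ 2 + b)) := by
    rw [Real.sqrt_monotone.map_min,
      ← Real.sqrt_sq (by positivity : 0 ≤ a * Real.sqrt η / (a ^ 2 + b)),
      div_pow, mul_pow, Real.sq_sqrt hη.le]
  rw [sq_sqrt_mul_div_sqrt_sub_one_add_eq a b η _ hc.ne' hη hq,
    sq_sqrt_mul_div_sqrt_sub_one_add_eq a b η p hc.ne' hη hp, hsqrt]
  gcongr (a ^ 2 + b) / η * ?_ + _
  exact sq_le_sq.mpr (abs_min_sub_le_abs_sub (Real.sqrt_le_sqrt hpP))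
end

section
/- Let a_j > 0, c_j ≥ 0 for j = 1,…,u, σ² > 0, P > 0, and define H(η) = Σ_{j=1}^u (√P·a_j/√η − 1)² + Σ_{j=1}^u P·c_j/η + σ²/η for η > 0 (plus a constant independent of η). Then H is strictly decreasing on (0, η̂] and strictly increasing on [η̂, ∞), where η̂ = ((Σ_{j=1}^u P(a_j² + c_j) + σ²)/(Σ_{j=1}^u √P·a_j))², so η̂ is the unique minimizer of H on (0,∞). -/
/-!
Substituting `t = 1/√η` turns `H` into the quadratic `A t² - 2 B t + u` with
`A = Σ_j P(a_j² + c_j) + σ²` and `B = Σ_j √P a_j`, whose vertex is `t = B/A`, i.e. `η = (A/B)²`.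
Since `η ↦ 1/√η` is strictly decreasing, the quadratic's decrease on `t ≤ B/A` and increase on
`t ≥ B/A` become the increase of `H` on `[η̂, ∞)` and its decrease on `(0, η̂]`.
-/

open Set

section Quadratic

variable {A B C : ℝ}

lemma strictMonoOn_quadratic (hA : 0 < A) :
    StrictMonoOn (fun t => A * t ^ 2 - 2 * B * t + C) (Ici (B / A)) := by
  intro x hx y _ hxy
  rw [mem_Ici, div_le_iff₀ hA] at hx
  dsimp only
  nlinarith [mul_pos hA (pow_pos (sub_pos.2 hxy) 2),
    mul_nonneg (sub_pos.2 hxy).le (sub_nonneg.2 hx)]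

lemma strictAntiOn_quadratic (hA : 0 < A) :
    StrictAntiOn (fun t => A * t ^ 2 - 2 * B * t + C) (Iic (B / A)) := by
  intro x _ y hy hxy
  rw [mem_Iic, le_div_iff₀ hA] at hy
  dsimp only
  nlinarith [mul_pos hA (pow_pos (sub_pos.2 hxy) 2),
    mul_nonneg (sub_pos.2 hxy).le (sub_nonneg.2 hy)]

end Quadratic

lemma strictAntiOn_inv_sqrt : StrictAntiOn (fun η : ℝ => (√η)⁻¹) (Ioi 0) :=
  fun _ hx _ _ hxy => inv_strictAntiOn (Real.sqrt_pos.2 hx) (Real.sqrt_pos.2 (hx.trans hxy))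
    (Real.sqrt_lt_sqrt hx.le hxy)

lemma mapsTo_inv_sqrt_Ioc_sq {r : ℝ} (hr : 0 < r) :
    MapsTo (fun η : ℝ => (√η)⁻¹) (Ioc 0 (r ^ 2)) (Ici r⁻¹) := fun η hη =>
  inv_anti₀ (Real.sqrt_pos.2 hη.1) <| by
    simpa [Real.sqrt_sq hr.le] using Real.sqrt_le_sqrt hη.2

lemma mapsTo_inv_sqrt_Ici_sq {r : ℝ} (hr : 0 < r) :
    MapsTo (fun η : ℝ => (√η)⁻¹) (Ici (r ^ 2)) (Iic r⁻¹) := fun η hη =>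
  inv_anti₀ hr <| by simpa [Real.sqrt_sq hr.le] using Real.sqrt_le_sqrt hη

section QuadraticInvSqrt

variable {A B C : ℝ}

lemma strictAntiOn_quadratic_inv_sqrt (hA : 0 < A) (hB : 0 < B) :
    StrictAntiOn (fun η => A * (√η)⁻¹ ^ 2 - 2 * B * (√η)⁻¹ + C) (Ioc 0 ((A / B) ^ 2)) := by
  have hmaps := mapsTo_inv_sqrt_Ioc_sq (div_pos hA hB)
  rw [inv_div] at hmaps
  exact (strictMonoOn_quadratic hA).comp_strictAntiOn
    (strictAntiOn_inv_sqrt.mono Ioc_subset_Ioi_self) hmaps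

lemma strictMonoOn_quadratic_inv_sqrt (hA : 0 < A) (hB : 0 < B) :
    StrictMonoOn (fun η => A * (√η)⁻¹ ^ 2 - 2 * B * (√η)⁻¹ + C) (Ici ((A / B) ^ 2)) := by
  have hmaps := mapsTo_inv_sqrt_Ici_sq (div_pos hA hB)
  rw [inv_div] at hmaps
  exact (strictAntiOn_quadratic hA).comp
    (strictAntiOn_inv_sqrt.mono (Ici_subset_Ioi.2 (by positivity))) hmaps

end QuadraticInvSqrt

lemma sum_sq_sub_one_add_eq_quadratic {ι : Type*} [Fintype ι] (a c : ι → ℝ) {σ2 P η : ℝ}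
    (hP : 0 ≤ P) (hη : 0 ≤ η) :
    ∑ j, (√P * a j / √η - 1) ^ 2 + ∑ j, P * c j / η + σ2 / η
      = (∑ j, P * (a j ^ 2 + c j) + σ2) * (√η)⁻¹ ^ 2 - 2 * (∑ j, √P * a j) * (√η)⁻¹
        + Fintype.card ι := by
  set t := (√η)⁻¹
  have hinv : η⁻¹ = t ^ 2 := by rw [inv_pow, Real.sq_sqrt hη]
  have hPsq : √P ^ 2 = P := Real.sq_sqrt hP
  calc _ = ∑ j, (P * (a j ^ 2 + c j) * t ^ 2 - 2 * (√P * a j) * t + 1) + σ2 * t ^ 2 := by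
        simp only [div_eq_mul_inv, hinv, ← Finset.sum_add_distrib]
        congr 1
        refine Finset.sum_congr rfl fun j _ => ?_
        linear_combination (a j * t) ^ 2 * hPsq
    _ = _ := by
        rw [Finset.sum_add_distrib, Finset.sum_sub_distrib, ← Finset.sum_mul, ← Finset.sum_mul,
          ← Finset.mul_sum _ _ (2 : ℝ), Finset.sum_const, Finset.card_univ, nsmul_one]
        ring

open Finset in
/-- `H(η) = Σ_j (√P a_j/√η − 1)² + Σ_j P c_j/η + σ²/η` is strictly decreasing on
`(0, ηhat]` and strictly increasing on `[ηhat, ∞)`, where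
`ηhat = ((Σ_j P(a_j² + c_j) + σ²)/(Σ_j √P a_j))²`, so `ηhat` is the unique minimizer. -/
theorem stmt_1 (u : ℕ) (hu : 0 < u) (a c : Fin u → ℝ) (ha : ∀ j, 0 < a j)
    (hc : ∀ j, 0 ≤ c j) (σ2 P : ℝ) (hσ : 0 < σ2) (hP : 0 < P)
    (H : ℝ → ℝ)
    (hH : ∀ η : ℝ, 0 < η →
      H η = ∑ j, (Real.sqrt P * a j / Real.sqrt η - 1) ^ 2
              + ∑ j, P * c j / η + σ2 / η)
    (ηhat : ℝ)
    (hηhat : ηhat = ((∑ j, P * ((a j) ^ 2 + c j) + σ2) / (∑ j, Real.sqrt P * a j)) ^ 2) :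
    StrictAntiOn H (Set.Ioc 0 ηhat) ∧ StrictMonoOn H (Set.Ici ηhat) ∧
    ∀ η : ℝ, 0 < η → η ≠ ηhat → H ηhat < H η := by
  set A := ∑ j, P * ((a j) ^ 2 + c j) + σ2
  set B := ∑ j, Real.sqrt P * a j
  subst hηhat
  have hA : 0 < A :=
    add_pos_of_nonneg_of_pos (sum_nonneg fun j _ => by have := hc j; positivity) hσ
  have hB : 0 < B := sum_pos (fun j _ => mul_pos (Real.sqrt_pos.2 hP) (ha j)) ⟨⟨0, hu⟩, mem_univ _⟩
  have hH_eq : EqOn (fun η => A * (√η)⁻¹ ^ 2 - 2 * B * (√η)⁻¹ + u) H (Ioi 0) := fun η hη => by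
    rw [hH η hη, sum_sq_sub_one_add_eq_quadratic a c hP.le (le_of_lt hη), Fintype.card_fin]
  have hanti : StrictAntiOn H (Ioc 0 ((A / B) ^ 2)) :=
    (strictAntiOn_quadratic_inv_sqrt hA hB).congr (hH_eq.mono Ioc_subset_Ioi_self)
  have hmono : StrictMonoOn H (Ici ((A / B) ^ 2)) :=
    (strictMonoOn_quadratic_inv_sqrt hA hB).congr (hH_eq.mono (Ici_subset_Ioi.2 (by positivity)))
  refine ⟨hanti, hmono, fun η hη hne => ?_⟩
  rcases hne.lt_or_gt with hlt | hgt
  · exact hanti ⟨hη, hlt.le⟩ ⟨by positivity, le_rfl⟩ hlt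
  · exact hmono (mem_Ici.2 le_rfl) hgt.le hgt
end

section
/- Let f(η) = Σ_{j=1}^u (√P a_j/√η − 1)² + (D + Σ_{j=1}^u P c_j)/η + σ²/η for η > 0, with a_j > 0, c_j, D ≥ 0, σ² > 0, P > 0. The unique critical point of f is η̂ = ((D + σ² + Σ_{j=1}^u P(a_j² + c_j))/(Σ_{j=1}^u √P a_j))², and f(η̂) = u − (Σ_{j=1}^u √P a_j)²/(D + σ² + Σ_{j=1}^u P(a_j² + c_j)). -/
open Finset in
/-- Denoising-factor optimization with residual interference `D`:
`f(η) = Σ_j(√P a_j/√η − 1)² + (D + Σ_j P c_j)/η + σ²/η` has unique critical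
point `η̂ = ((D + σ² + Σ_j P(a_j²+c_j))/(Σ_j √P a_j))²`, and
`f(η̂) = u − (Σ_j √P a_j)²/(D + σ² + Σ_j P(a_j²+c_j))`. -/
theorem stmt_8 (u : ℕ) (hu : 0 < u) (a c : Fin u → ℝ) (ha : ∀ j, 0 < a j)
    (hc : ∀ j, 0 ≤ c j) (D σ2 P : ℝ) (hD : 0 ≤ D) (hσ : 0 < σ2) (hP : 0 < P)
    (f : ℝ → ℝ)
    (hf : ∀ η : ℝ, 0 < η →
      f η = ∑ j, (Real.sqrt P * a j / Real.sqrt η - 1) ^ 2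
              + (D + ∑ j, P * c j) / η + σ2 / η)
    (ηhat : ℝ)
    (hηhat : ηhat = ((D + σ2 + ∑ j, P * ((a j) ^ 2 + c j))
                      / (∑ j, Real.sqrt P * a j)) ^ 2) :
    deriv f ηhat = 0 ∧ (∀ η : ℝ, 0 < η → deriv f η = 0 → η = ηhat) ∧
    f ηhat = u - (∑ j, Real.sqrt P * a j) ^ 2
              / (D + σ2 + ∑ j, P * ((a j) ^ 2 + c j)) := by
  set S : ℝ := ∑ j, Real.sqrt P * a j with hSdef
  set T : ℝ := D + σ2 + ∑ j, P * ((a j) ^ 2 + c j) with hTdef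
  have hS : 0 < S := by
    apply Finset.sum_pos (fun j _ => mul_pos (Real.sqrt_pos.2 hP) (ha j))
    exact Finset.univ_nonempty_iff.2 ⟨⟨0, hu⟩⟩
  have hsum0 : 0 ≤ ∑ j, P * ((a j) ^ 2 + c j) :=
    Finset.sum_nonneg fun j _ => mul_nonneg hP.le (by have := hc j; positivity)
  have hT : 0 < T := by rw [hTdef]; linarith
  have hTsplit : T = (∑ j, P * (a j) ^ 2) + (D + ∑ j, P * c j) + σ2 := by
    rw [hTdef, show ∑ j, P * ((a j) ^ 2 + c j)
        = (∑ j, P * (a j) ^ 2) + ∑ j, P * c j from by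
      rw [← Finset.sum_add_distrib]; exact Finset.sum_congr rfl fun j _ => by ring]
    ring
  -- rewrite f on positives
  have key : ∀ η : ℝ, 0 < η → f η = u + T / η - 2 * S / Real.sqrt η := by
    intro η hη
    have hsη : (0:ℝ) < Real.sqrt η := Real.sqrt_pos.2 hη
    have hsq : Real.sqrt η ^ 2 = η := Real.sq_sqrt hη.le
    have hPsq : Real.sqrt P ^ 2 = P := Real.sq_sqrt hP.le
    have hterm : ∀ j : Fin u, (Real.sqrt P * a j / Real.sqrt η - 1) ^ 2
        = P * (a j) ^ 2 / η - 2 * (Real.sqrt P * a j) / Real.sqrt η + 1 := by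
      intro j
      rw [sub_sq, div_pow, mul_pow, hPsq, hsq, one_pow, mul_one]
      ring
    have hsum : ∑ j, (Real.sqrt P * a j / Real.sqrt η - 1) ^ 2
        = (∑ j, P * (a j) ^ 2) / η - 2 * S / Real.sqrt η + u := by
      rw [Finset.sum_congr rfl (fun j _ => hterm j), Finset.sum_add_distrib,
        Finset.sum_sub_distrib]
      congr 1
      · congr 1
        · rw [← Finset.sum_div]
        · rw [← Finset.sum_div, ← Finset.mul_sum]
      · simp
    rw [hf η hη, hsum, hTsplit]
    field_simp
    ring
  -- derivative of the closed form
  have hderiv : ∀ η : ℝ, 0 < η →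
      HasDerivAt f (S / (η * Real.sqrt η) - T / η ^ 2) η := by
    intro η hη
    have hsη : (0:ℝ) < Real.sqrt η := Real.sqrt_pos.2 hη
    have hsq : Real.sqrt η ^ 2 = η := Real.sq_sqrt hη.le
    have h1 : HasDerivAt (fun x : ℝ => T / x) (-T / η ^ 2) η := by
      simpa [div_eq_mul_inv, neg_div] using (hasDerivAt_inv hη.ne').const_mul T
    have h2 : HasDerivAt Real.sqrt (1 / (2 * Real.sqrt η)) η :=
      Real.hasDerivAt_sqrt hη.ne'
    have h3 : HasDerivAt (fun x : ℝ => 2 * S / Real.sqrt x)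
        (2 * S * (-(1 / (2 * Real.sqrt η)) / Real.sqrt η ^ 2)) η := by
      simpa [div_eq_mul_inv] using (h2.inv hsη.ne').const_mul (2 * S)
    have hg : HasDerivAt (fun x : ℝ => (u : ℝ) + T / x - 2 * S / Real.sqrt x)
        (S / (η * Real.sqrt η) - T / η ^ 2) η := by
      have := (h1.const_add (u : ℝ)).sub h3
      refine this.congr_deriv ?_
      rw [hsq]
      field_simp
      ring
    apply hg.congr_of_eventuallyEq
    filter_upwards [Ioi_mem_nhds hη] with x hx
    exact key x hx
  have hηhatpos : 0 < ηhat := by rw [hηhat]; positivity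
  have hsqrtηhat : Real.sqrt ηhat = T / S := by
    rw [hηhat, Real.sqrt_sq (by positivity)]
  have hderiv0 : ∀ η : ℝ, 0 < η → deriv f η = S / (η * Real.sqrt η) - T / η ^ 2 :=
    fun η hη => (hderiv η hη).deriv
  refine ⟨?_, ?_, ?_⟩
  · rw [hderiv0 ηhat hηhatpos, hsqrtηhat, hηhat]
    field_simp
    ring
  · intro η hη hd
    rw [hderiv0 η hη] at hd
    have hsη : (0:ℝ) < Real.sqrt η := Real.sqrt_pos.2 hη
    have hsq : Real.sqrt η ^ 2 = η := Real.sq_sqrt hη.le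
    have h1 : S * η ^ 2 = T * (η * Real.sqrt η) := by
      have := sub_eq_zero.1 hd
      field_simp at this
      linear_combination η * this
    have hη2 : η ^ 2 = (η * Real.sqrt η) * Real.sqrt η := by
      rw [mul_assoc, ← pow_two, hsq, pow_two]
    have h1' : S * Real.sqrt η * (η * Real.sqrt η) = T * (η * Real.sqrt η) := by
      linear_combination h1 - S * hη2
    have h2 : Real.sqrt η = T / S := by
      have := mul_right_cancel₀ (by positivity : η * Real.sqrt η ≠ 0) h1'
      field_simp
      linarith [this]
    rw [hηhat, ← h2, hsq]
  · rw [key ηhat hηhatpos, hsqrtηhat, hηhat]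
    field_simp
    ring
end
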